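/- If ρ and σ are two fixed point states of a trace-preserving completely positive map E, and λ, γ are real numbers such that λρ + γσ is a nonzero positive operator, then λρ + γσ is also a fixed point of E. Consequently, a minimal fixed point state with a given support is unique up to positive scalar multiple. -/

import Mathlib

open Matrix Filter Topology
open scoped ComplexOrder

/-- The matrix of the orthogonal projection onto a subspace `X`. -/
noncomputable def projMat {d : ℕ} (X : Submodule ℂ (EuclideanSpace ℂ (Fin d))) :
    Matrix (Fin d) (Fin d) ℂ :=
  Matrix.toEuclideanLin.symm ((X.subtypeL.comp (X.orthogonalProjection)).toLinearMap)

/-- The support of an operator: the range of the associated linear map. -/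
noncomputable def matSupp {d : ℕ} (A : Matrix (Fin d) (Fin d) ℂ) :
    Submodule ℂ (EuclideanSpace ℂ (Fin d)) :=
  LinearMap.range (Matrix.toEuclideanLin A)

/-- The outer product `|v⟩⟨v|`. -/
noncomputable def outer {d : ℕ} (v : EuclideanSpace ℂ (Fin d)) : Matrix (Fin d) (Fin d) ℂ :=
  fun i j => v i * star (v j)

/-- The completely positive map `A ↦ ∑ i, E i * A * (E i)†` given by Kraus operators `E`. -/
noncomputable def krausMap {d m : ℕ} (E : Fin m → Matrix (Fin d) (Fin d) ℂ)
    (A : Matrix (Fin d) (Fin d) ℂ) : Matrix (Fin d) (Fin d) ℂ :=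
  ∑ i, E i * A * (E i)ᴴ

/-- A fixed point state: a nonzero positive semidefinite operator with `E(ρ) = ρ`. -/
noncomputable def FixedState {d m : ℕ} (E : Fin m → Matrix (Fin d) (Fin d) ℂ)
    (ρ : Matrix (Fin d) (Fin d) ℂ) : Prop :=
  ρ.PosSemidef ∧ ρ ≠ 0 ∧ krausMap E ρ = ρ

open scoped InnerProductSpace

/-!
Let `σ` be a minimal fixed point state and `ρ` a fixed point state with `supp ρ ⊆ supp σ`. Take the
largest real `λ` with `λ ρ ≤ σ` in the Loewner order. By linearity of `E`, `τ = σ - λ ρ` is a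
positive fixed point, and `supp τ ⊆ supp σ` because `σ = τ + λ ρ` is a sum of positive operators.
If `τ ≠ 0`, minimality gives `supp τ = supp σ ⊇ supp ρ`; but a positive operator dominates a small
multiple of any positive operator whose support lies in its own (its quadratic form is bounded
below on the unit sphere of its support), so `(λ + δ) ρ ≤ σ` for some `δ > 0`, contradicting the
choice of `λ`. Hence `τ = 0` and `σ = λ ρ`, with `λ > 0` as `σ ≠ 0`.
-/

namespace LinearMap

variable {𝕜 E : Type*} [RCLike 𝕜] [NormedAddCommGroup E] [InnerProductSpace 𝕜 E]

theorem IsPositive.apply_eq_zero_of_re_inner_eq_zero {T : E →ₗ[𝕜] E} (hT : T.IsPositive)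
    {x : E} (hx : RCLike.re ⟪T x, x⟫_𝕜 = 0) : T x = 0 := by
  -- Positivity at `x - t • T x` reads `2 t ‖T x‖² ≤ t² re ⟪T (T x), T x⟫` for every real `t`.
  set c := RCLike.re ⟪T (T x), T x⟫_𝕜
  have hc : 0 ≤ c := hT.re_inner_nonneg_left (T x)
  have expand : ∀ t : ℝ, RCLike.re ⟪T (x - (t : 𝕜) • T x), x - (t : 𝕜) • T x⟫_𝕜
      = -2 * t * ‖T x‖ ^ 2 + t ^ 2 * c := by
    intro t
    have hsym : ⟪T (T x), x⟫_𝕜 = ⟪T x, T x⟫_𝕜 := hT.isSymmetric (T x) x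
    simp only [map_sub, map_smul, inner_sub_left, inner_sub_right, inner_smul_left,
      inner_smul_right, hsym, RCLike.conj_ofReal, RCLike.re_ofReal_mul, hx,
      inner_self_eq_norm_sq_to_K, RCLike.re_ofReal_pow, c]
    ring
  set a := ‖T x‖ ^ 2
  have key := hT.re_inner_nonneg_left (x - ((a / (c + 1) : ℝ) : 𝕜) • T x)
  rw [expand] at key
  have hsq : a = 0 := by
    have ht : a / (c + 1) * (c + 1) = a := div_mul_cancel₀ a (by positivity)
    nlinarith [sq_nonneg (a / (c + 1))]
  simpa [a] using hsq

theorem IsPositive.ker_add_le {T S : E →ₗ[𝕜] E} (hT : T.IsPositive) (hS : S.IsPositive) :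
    ker (T + S) ≤ ker T := by
  intro x hx
  rw [mem_ker, add_apply] at hx
  have hsum : RCLike.re ⟪T x, x⟫_𝕜 + RCLike.re ⟪S x, x⟫_𝕜 = 0 := by
    rw [← map_add, ← inner_add_left, hx, inner_zero_left, map_zero]
  exact hT.apply_eq_zero_of_re_inner_eq_zero
    (by linarith [hT.re_inner_nonneg_left x, hS.re_inner_nonneg_left x])

theorem IsSymmetric.range_le_range_iff [FiniteDimensional 𝕜 E] {T S : E →ₗ[𝕜] E}
    (hT : T.IsSymmetric) (hS : S.IsSymmetric) : range T ≤ range S ↔ ker S ≤ ker T := by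
  rw [← hT.orthogonal_range, ← hS.orthogonal_range, Submodule.orthogonal_le_orthogonal_iff]

theorem IsPositive.range_le_range_add {T S : E →ₗ[𝕜] E} [FiniteDimensional 𝕜 E]
    (hT : T.IsPositive) (hS : S.IsPositive) : range T ≤ range (T + S) :=
  (hT.isSymmetric.range_le_range_iff (hT.isSymmetric.add hS.isSymmetric)).mpr (hT.ker_add_le hS)

theorem IsSymmetric.inner_map_add_of_apply_eq_zero {S : E →ₗ[𝕜] E} (hS : S.IsSymmetric)
    (v : E) {w : E} (hw : S w = 0) : ⟪S (v + w), v + w⟫_𝕜 = ⟪S v, v⟫_𝕜 := by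
  rw [map_add, hw, add_zero, inner_add_right, hS v w, hw, inner_zero_right, add_zero]

theorem IsPositive.exists_pos_mul_norm_sq_le [FiniteDimensional 𝕜 E] {T : E →ₗ[𝕜] E}
    (hT : T.IsPositive) :
    ∃ μ : ℝ, 0 < μ ∧ ∀ v ∈ (ker T)ᗮ, μ * ‖v‖ ^ 2 ≤ RCLike.re ⟪T v, v⟫_𝕜 := by
  have : ProperSpace E := FiniteDimensional.proper 𝕜 E
  set K := (ker T)ᗮ
  have hcompact : IsCompact ((K : Set E) ∩ Metric.sphere 0 1) :=
    (isCompact_sphere 0 1).inter_left (Submodule.closed_of_finiteDimensional K)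
  have hcont : Continuous fun v => RCLike.re ⟪T v, v⟫_𝕜 :=
    RCLike.continuous_re.comp (T.continuous_of_finiteDimensional.inner continuous_id)
  have hpos : ∀ u ∈ (K : Set E) ∩ Metric.sphere 0 1, 0 < RCLike.re ⟪T u, u⟫_𝕜 := by
    rintro u ⟨huK, hu⟩
    refine (hT.re_inner_nonneg_left u).lt_of_ne fun h => ?_
    have hu0 : u ∈ ker T ⊓ (ker T)ᗮ := ⟨hT.apply_eq_zero_of_re_inner_eq_zero h.symm, huK⟩
    rw [Submodule.inf_orthogonal_eq_bot, Submodule.mem_bot] at hu0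
    simp [hu0] at hu
  obtain ⟨μ, hμ, hμle⟩ := hcompact.exists_forall_le' hcont.continuousOn hpos
  refine ⟨μ, hμ, fun v hv => ?_⟩
  rcases eq_or_ne v 0 with rfl | hv0
  · simp
  have hnorm : ‖v‖ ≠ 0 := norm_ne_zero_iff.mpr hv0
  have hu := hμle ((‖v‖⁻¹ : 𝕜) • v) ⟨K.smul_mem _ hv, by simp [norm_smul, hnorm]⟩
  rw [map_smul, inner_smul_left, inner_smul_right, ← mul_assoc, RCLike.conj_inv,
    RCLike.conj_ofReal, ← RCLike.ofReal_inv, ← RCLike.ofReal_mul, RCLike.re_ofReal_mul,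
    ← mul_inv, ← sq, ← div_eq_inv_mul, le_div_iff₀ (by positivity)] at hu
  exact hu

theorem IsPositive.exists_pos_smul_le_of_ker_le [FiniteDimensional 𝕜 E] {T S : E →ₗ[𝕜] E}
    (hT : T.IsPositive) (hS : S.IsSymmetric) (hker : ker T ≤ ker S) :
    ∃ δ : ℝ, 0 < δ ∧ (δ : 𝕜) • S ≤ T := by
  obtain ⟨μ, hμ, hμle⟩ := hT.exists_pos_mul_norm_sq_le
  set C := ‖toContinuousLinearMap S‖ + 1
  have hC : 0 < C := by positivity
  have hSle : ∀ v, RCLike.re ⟪S v, v⟫_𝕜 ≤ C * ‖v‖ ^ 2 := fun v =>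
    calc RCLike.re ⟪S v, v⟫_𝕜 ≤ ‖S v‖ * ‖v‖ := re_inner_le_norm _ _
      _ ≤ ‖toContinuousLinearMap S‖ * ‖v‖ * ‖v‖ := by
          gcongr; exact (toContinuousLinearMap S).le_opNorm v
      _ ≤ C * ‖v‖ ^ 2 := by nlinarith [norm_nonneg v]
  refine ⟨μ / C, by positivity, hT.isSymmetric.sub (hS.smul (RCLike.conj_ofReal _)), fun y => ?_⟩
  set K := (ker T)ᗮ
  have hKperp : Kᗮ = ker T := Submodule.orthogonal_orthogonal _
  obtain ⟨v, hv, w, hw, rfl⟩ : ∃ v ∈ K, ∃ w ∈ ker T, y = v + w :=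
    ⟨_, K.starProjection_apply_mem y, _, hKperp.le (K.sub_starProjection_mem_orthogonal y),
      (add_sub_cancel _ _).symm⟩
  rw [sub_apply, smul_apply, inner_sub_left, inner_smul_left, map_sub, RCLike.conj_ofReal,
    RCLike.re_ofReal_mul, hT.isSymmetric.inner_map_add_of_apply_eq_zero v hw,
    hS.inner_map_add_of_apply_eq_zero v (hker hw), sub_nonneg]
  calc μ / C * RCLike.re ⟪S v, v⟫_𝕜 ≤ μ / C * (C * ‖v‖ ^ 2) := by gcongr; exact hSle v
    _ = μ * ‖v‖ ^ 2 := by field_simp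
    _ ≤ RCLike.re ⟪T v, v⟫_𝕜 := hμle v hv

theorem IsSymmetric.ofReal_smul_le_iff {T S : E →ₗ[𝕜] E} (hT : T.IsSymmetric) (hS : S.IsSymmetric)
    (t : ℝ) : (t : 𝕜) • T ≤ S ↔ ∀ x, t * RCLike.re ⟪T x, x⟫_𝕜 ≤ RCLike.re ⟪S x, x⟫_𝕜 := by
  have hre : ∀ x, RCLike.re ⟪(S - (t : 𝕜) • T) x, x⟫_𝕜 =
      RCLike.re ⟪S x, x⟫_𝕜 - t * RCLike.re ⟪T x, x⟫_𝕜 := fun x => by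
    rw [sub_apply, smul_apply, inner_sub_left, inner_smul_left, map_sub, RCLike.conj_ofReal,
      RCLike.re_ofReal_mul]
  refine ⟨fun h x => sub_nonneg.mp (hre x ▸ h.2 x), fun h => ⟨hS.sub (hT.smul
    (RCLike.conj_ofReal _)), fun x => hre x ▸ sub_nonneg.mpr (h x)⟩⟩

theorem IsPositive.exists_isGreatest_smul_le {T S : E →ₗ[𝕜] E} (hT : T.IsPositive) (hT0 : T ≠ 0)
    (hS : S.IsPositive) : ∃ l : ℝ, IsGreatest {t : ℝ | (t : 𝕜) • T ≤ S} l := by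
  set A := {t : ℝ | (t : 𝕜) • T ≤ S}
  have hA : A = ⋂ x, {t : ℝ | t * RCLike.re ⟪T x, x⟫_𝕜 ≤ RCLike.re ⟪S x, x⟫_𝕜} := by
    ext t
    simp only [A, Set.mem_iInter, Set.mem_ofPred_eq,
      hT.isSymmetric.ofReal_smul_le_iff hS.isSymmetric]
  have hclosed : IsClosed A :=
    hA ▸ isClosed_iInter fun _ => isClosed_le (by fun_prop) continuous_const
  have hzero : (0 : ℝ) ∈ A := by simpa [A] using (nonneg_iff_isPositive S).mpr hS
  obtain ⟨x, hx⟩ := hT.ne_zero_iff.mp hT0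
  have hbdd : BddAbove A := by
    refine ⟨RCLike.re ⟪S x, x⟫_𝕜 / RCLike.re ⟪T x, x⟫_𝕜, fun t ht => ?_⟩
    rw [le_div_iff₀ (RCLike.pos_iff.mp hx).1]
    exact (hT.isSymmetric.ofReal_smul_le_iff hS.isSymmetric t).mp ht x
  exact ⟨sSup A, hclosed.csSup_mem ⟨0, hzero⟩ hbdd, fun t ht => le_csSup hbdd ht⟩

end LinearMap

theorem Matrix.posSemidef_sub_iff_toEuclideanLin_le {n 𝕜 : Type*} [RCLike 𝕜] [Fintype n]
    [DecidableEq n] {A B : Matrix n n 𝕜} :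
    (B - A).PosSemidef ↔ toEuclideanLin A ≤ toEuclideanLin B := by
  rw [LinearMap.le_def, ← map_sub, Matrix.isPositive_toEuclideanLin_iff]

section Kraus

variable {d m : ℕ} (E : Fin m → Matrix (Fin d) (Fin d) ℂ)

noncomputable def krausLinearMap : Matrix (Fin d) (Fin d) ℂ →ₗ[ℂ] Matrix (Fin d) (Fin d) ℂ where
  toFun := krausMap E
  map_add' A B := by simp [krausMap, Matrix.mul_add, Matrix.add_mul, Finset.sum_add_distrib]
  map_smul' c A := by simp [krausMap, Finset.smul_sum]

@[simp]
theorem krausLinearMap_apply (A : Matrix (Fin d) (Fin d) ℂ) : krausLinearMap E A = krausMap E A :=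
  rfl

theorem krausMap_smul_add_smul {ρ σ : Matrix (Fin d) (Fin d) ℂ} (hρ : krausMap E ρ = ρ)
    (hσ : krausMap E σ = σ) (a b : ℂ) : krausMap E (a • ρ + b • σ) = a • ρ + b • σ := by
  rw [← krausLinearMap_apply, map_add, map_smul, map_smul, krausLinearMap_apply,
    krausLinearMap_apply, hρ, hσ]

variable {E}

theorem FixedState.exists_eq_smul_of_minimal {ρ σ : Matrix (Fin d) (Fin d) ℂ}
    (hρ : FixedState E ρ) (hσ : FixedState E σ)
    (hmin : ∀ τ, FixedState E τ → matSupp τ ≤ matSupp σ → matSupp τ = matSupp σ)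
    (hsupp : matSupp ρ ≤ matSupp σ) : ∃ c : ℝ, 0 < c ∧ σ = (c : ℂ) • ρ := by
  have hTρ := Matrix.isPositive_toEuclideanLin_iff.mpr hρ.1
  have hTσ := Matrix.isPositive_toEuclideanLin_iff.mpr hσ.1
  obtain ⟨l, hl, hl_max⟩ := hTρ.exists_isGreatest_smul_le
    ((LinearEquiv.map_ne_zero_iff _).mpr hρ.2.1) hTσ
  have hl0 : 0 ≤ l := hl_max (by simpa using (LinearMap.nonneg_iff_isPositive _).mpr hTσ)
  set τ := σ - (l : ℂ) • ρ
  have hTτ_eq : toEuclideanLin τ = toEuclideanLin σ - (l : ℂ) • toEuclideanLin ρ := by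
    rw [map_sub, map_smul]
  have hτ : τ.PosSemidef := Matrix.posSemidef_sub_iff_toEuclideanLin_le.mpr (by rwa [map_smul])
  have hTτ := Matrix.isPositive_toEuclideanLin_iff.mpr hτ
  rcases eq_or_ne τ 0 with hτ0 | hτ0
  · have hσ_eq : σ = (l : ℂ) • ρ := sub_eq_zero.mp hτ0
    refine ⟨l, hl0.lt_of_ne ?_, hσ_eq⟩
    rintro rfl
    exact hσ.2.1 (by simpa using hσ_eq)
  exfalso
  have hτfix : FixedState E τ := by
    refine ⟨hτ, hτ0, ?_⟩
    rw [← krausLinearMap_apply, map_sub, map_smul, krausLinearMap_apply, krausLinearMap_apply,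
      hσ.2.2, hρ.2.2]
  have hτσ : matSupp τ ≤ matSupp σ := by
    have hsum : toEuclideanLin τ + (l : ℂ) • toEuclideanLin ρ = toEuclideanLin σ := by
      rw [hTτ_eq, sub_add_cancel]
    have := hTτ.range_le_range_add (hTρ.smul_of_nonneg (Complex.zero_le_real.mpr hl0))
    rwa [hsum] at this
  have hρτ : matSupp ρ ≤ matSupp τ := hsupp.trans (hmin τ hτfix hτσ).ge
  obtain ⟨δ, hδ, hδle⟩ := hTτ.exists_pos_smul_le_of_ker_le hTρ.isSymmetric
    ((hTρ.isSymmetric.range_le_range_iff hTτ.isSymmetric).mp hρτ)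
  have : l + δ ≤ l := hl_max <| calc
    ((l + δ : ℝ) : ℂ) • toEuclideanLin ρ
        = (l : ℂ) • toEuclideanLin ρ + (δ : ℂ) • toEuclideanLin ρ := by push_cast; rw [add_smul]
    _ ≤ (l : ℂ) • toEuclideanLin ρ + toEuclideanLin τ := add_le_add_right hδle _
    _ = toEuclideanLin σ := by rw [hTτ_eq, add_sub_cancel]
  linarith

end Kraus

theorem stmt8_general {d m : ℕ} (E : Fin m → Matrix (Fin d) (Fin d) ℂ) :
    (∀ (ρ σ : Matrix (Fin d) (Fin d) ℂ) (l g : ℝ), FixedState E ρ → FixedState E σ →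
      (l : ℂ) • ρ + (g : ℂ) • σ ≠ 0 → ((l : ℂ) • ρ + (g : ℂ) • σ).PosSemidef →
      krausMap E ((l : ℂ) • ρ + (g : ℂ) • σ) = (l : ℂ) • ρ + (g : ℂ) • σ) ∧
    (∀ ρ σ : Matrix (Fin d) (Fin d) ℂ, FixedState E ρ → FixedState E σ →
      (∀ τ : Matrix (Fin d) (Fin d) ℂ, FixedState E τ → matSupp τ ≤ matSupp ρ → matSupp τ = matSupp ρ) →
      (∀ τ : Matrix (Fin d) (Fin d) ℂ, FixedState E τ → matSupp τ ≤ matSupp σ → matSupp τ = matSupp σ) →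
      matSupp ρ = matSupp σ → ∃ c : ℝ, 0 < c ∧ σ = (c : ℂ) • ρ) :=
  ⟨fun _ _ _ _ hρ hσ _ _ => krausMap_smul_add_smul E hρ.2.2 hσ.2.2 _ _,
    fun _ _ hρ hσ _ hminσ hsupp => hρ.exists_eq_smul_of_minimal hσ hminσ hsupp.le⟩

/-- Real combinations of fixed point states that are nonzero and positive are again
fixed points; consequently a minimal fixed point state with a given support is unique
up to a positive scalar. -/
theorem stmt8 {d m : ℕ} (E : Fin m → Matrix (Fin d) (Fin d) ℂ)
    (hE : ∑ i, (E i)ᴴ * E i = 1) :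
    (∀ (ρ σ : Matrix (Fin d) (Fin d) ℂ) (l g : ℝ), FixedState E ρ → FixedState E σ →
      (l : ℂ) • ρ + (g : ℂ) • σ ≠ 0 → ((l : ℂ) • ρ + (g : ℂ) • σ).PosSemidef →
      krausMap E ((l : ℂ) • ρ + (g : ℂ) • σ) = (l : ℂ) • ρ + (g : ℂ) • σ) ∧
    (∀ ρ σ : Matrix (Fin d) (Fin d) ℂ, FixedState E ρ → FixedState E σ →
      (∀ τ : Matrix (Fin d) (Fin d) ℂ, FixedState E τ → matSupp τ ≤ matSupp ρ → matSupp τ = matSupp ρ) →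
      (∀ τ : Matrix (Fin d) (Fin d) ℂ, FixedState E τ → matSupp τ ≤ matSupp σ → matSupp τ = matSupp σ) →
      matSupp ρ = matSupp σ → ∃ c : ℝ, 0 < c ∧ σ = (c : ℂ) • ρ) :=
  stmt8_general E
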